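/- arXiv:2406.05864 — 2 statements merged into one kernel-verified Lean document; each statement's English description precedes it below -/
import Mathlib

section
/- Let u, v be unitaries on H, q ∈ 𝕋 with ‖vu - q·uv‖ ≤ δ, and N a positive integer. Then ‖v - (1/(2N+1)) ∑_{k=-N}^{N} q^k u^k v u^{-k}‖ ≤ (N(N+1)/(2N+1))·δ < ((N+1)/2)·δ. -/
/-!
Conjugation by `u` twisted by `q`, `x ↦ q • (u x u⋆)`, is a linear isometry `φ` of the C⋆-algebra,
the summands of the average are the `φ ^ k v`, and `‖v - φ v‖ = ‖vu - q • uv‖ ≤ δ`. Since `φ` is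
isometric, `v - φ ^ k v` telescopes into `|k|` terms of norm `‖v - φ v‖`, and
`∑_{|k| ≤ N} |k| = N (N + 1)`.
-/

/-- Integer powers of an operator `u`, where for `k < 0` we use `(u*)^(-k)` (appropriate when `u`
is unitary). -/
noncomputable def opZpow {H : Type*} [NormedAddCommGroup H] [InnerProductSpace ℂ H]
    [CompleteSpace H] (u : H →L[ℂ] H) : ℤ → (H →L[ℂ] H)
  | Int.ofNat n => u ^ n
  | Int.negSucc n => (star u) ^ (n + 1)

open Finset

namespace LinearIsometryEquiv

variable {R E : Type*} [Semiring R] [SeminormedAddCommGroup E] [Module R E]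

theorem norm_sub_pow_apply_le (f : E ≃ₗᵢ[R] E) (x : E) (n : ℕ) :
    ‖x - (f ^ n) x‖ ≤ n * ‖x - f x‖ := by
  induction n with
  | zero => simp
  | succ n ih =>
    have hsplit : x - (f ^ (n + 1)) x = (x - (f ^ n) x) + (f ^ n) (x - f x) := by
      rw [pow_succ, coe_mul, Function.comp_apply, map_sub]
      abel
    calc ‖x - (f ^ (n + 1)) x‖ ≤ ‖x - (f ^ n) x‖ + ‖x - f x‖ := by
          rw [hsplit, ← (f ^ n).norm_map (x - f x)]
          exact norm_add_le _ _
      _ ≤ (n + 1 : ℕ) * ‖x - f x‖ := by push_cast; linarith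

theorem norm_sub_zpow_apply_le (f : E ≃ₗᵢ[R] E) (x : E) (k : ℤ) :
    ‖x - (f ^ k) x‖ ≤ |k| * ‖x - f x‖ := by
  obtain ⟨n, rfl | rfl⟩ := k.eq_nat_or_neg
  · simpa using f.norm_sub_pow_apply_le x n
  · have hinv : ‖x - ((f ^ n)⁻¹) x‖ = ‖x - (f ^ n) x‖ := by
      rw [← (f ^ n).norm_map, map_sub, coe_inv, apply_symm_apply, norm_sub_rev]
    rw [zpow_neg, zpow_natCast, hinv, abs_neg, Int.cast_abs, Int.cast_natCast, Nat.abs_cast]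
    exact f.norm_sub_pow_apply_le x n

end LinearIsometryEquiv

theorem Int.sum_abs_Icc_neg (N : ℕ) : ∑ k ∈ Icc (-(N : ℤ)) N, |k| = N * (N + 1) := by
  induction N with
  | zero => simp
  | succ n ih =>
    have hIcc : Icc (-((n + 1 : ℕ) : ℤ)) ((n + 1 : ℕ) : ℤ)
        = insert (-((n + 1 : ℕ) : ℤ)) (insert ((n + 1 : ℕ) : ℤ) (Icc (-(n : ℤ)) n)) := by
      ext k; simp only [mem_Icc, mem_insert]; omega
    rw [hIcc, sum_insert (by simp only [mem_Icc, mem_insert]; omega),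
      sum_insert (by simp only [mem_Icc]; omega), ih, abs_neg, abs_of_nonneg (by positivity)]
    push_cast
    ring

theorem LinearIsometryEquiv.norm_sub_average_zpow_apply_le {𝕜 E : Type*} [RCLike 𝕜]
    [SeminormedAddCommGroup E] [NormedSpace 𝕜 E] (f : E ≃ₗᵢ[𝕜] E) (x : E) (N : ℕ) :
    ‖x - (2 * (N : 𝕜) + 1)⁻¹ • ∑ k ∈ Icc (-(N : ℤ)) N, (f ^ k) x‖
      ≤ (N : ℝ) * (N + 1) / (2 * N + 1) * ‖x - f x‖ := by
  have hcast : (2 * (N : 𝕜) + 1) = ((2 * N + 1 : ℕ) : 𝕜) := by push_cast; ring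
  have hcard : (Icc (-(N : ℤ)) N).card = 2 * N + 1 := by
    rw [Int.card_Icc]; omega
  have hx : x = (2 * (N : 𝕜) + 1)⁻¹ • ∑ _k ∈ Icc (-(N : ℤ)) N, x := by
    rw [sum_const, hcard, ← Nat.cast_smul_eq_nsmul 𝕜, ← hcast, smul_smul,
      inv_mul_cancel₀ (by rw [hcast]; exact Nat.cast_ne_zero.mpr (by omega)), one_smul]
  have hsum : ‖∑ k ∈ Icc (-(N : ℤ)) N, (x - (f ^ k) x)‖ ≤ N * (N + 1) * ‖x - f x‖ := by
    calc _ ≤ ∑ k ∈ Icc (-(N : ℤ)) N, ((|k| : ℤ) : ℝ) * ‖x - f x‖ :=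
          norm_sum_le_of_le _ fun k _ ↦ f.norm_sub_zpow_apply_le x k
      _ = N * (N + 1) * ‖x - f x‖ := by
          rw [← sum_mul, ← Int.cast_sum, Int.sum_abs_Icc_neg]
          push_cast; ring
  have hnorm : ‖(2 * (N : 𝕜) + 1)⁻¹‖ = (2 * (N : ℝ) + 1)⁻¹ := by
    rw [norm_inv, hcast, RCLike.norm_natCast]
    push_cast; ring
  calc _ = ‖(2 * (N : 𝕜) + 1)⁻¹ • ∑ k ∈ Icc (-(N : ℤ)) N, (x - (f ^ k) x)‖ := by
        rw [sum_sub_distrib, smul_sub, ← hx]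
    _ ≤ (2 * (N : ℝ) + 1)⁻¹ * (N * (N + 1) * ‖x - f x‖) := by
        rw [norm_smul, hnorm]
        gcongr
    _ = _ := by ring

section TwistedConj

variable {A : Type*} [NormedRing A] [StarRing A] [CStarRing A] [NormedAlgebra ℂ A]

noncomputable def twistedConj : Circle × unitary A →* (A ≃ₗᵢ[ℂ] A) where
  toFun p :=
    { toLinearEquiv := (Unitary.conjStarAlgAut ℂ A p.2).toAlgEquiv.toLinearEquiv.trans
        (LinearEquiv.smulOfUnit (Circle.toUnits p.1))
      norm_map' x := by
        show ‖(p.1 : ℂ) • ((p.2 : A) * x * star (p.2 : A))‖ = ‖x‖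
        rw [norm_smul, Circle.norm_coe, one_mul, ← Unitary.coe_star,
          CStarRing.norm_mul_coe_unitary, CStarRing.norm_coe_unitary_mul] }
  map_one' := LinearIsometryEquiv.ext fun x ↦ by
    show ((1 : Circle) : ℂ) • (((1 : unitary A) : A) * x * star ((1 : unitary A) : A)) = x
    simp
  map_mul' p p' := LinearIsometryEquiv.ext fun x ↦ by
    show ((p * p').1 : ℂ) • (((p * p').2 : A) * x * star ((p * p').2 : A)) =
      (p.1 : ℂ) • ((p.2 : A) * ((p'.1 : ℂ) • ((p'.2 : A) * x * star (p'.2 : A))) * star (p.2 : A))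
    simp [mul_smul, mul_assoc]

theorem twistedConj_apply (p : Circle × unitary A) (x : A) :
    twistedConj p x = (p.1 : ℂ) • ((p.2 : A) * x * star (p.2 : A)) := rfl

theorem twistedConj_zpow_apply (z : Circle) (U : unitary A) (k : ℤ) (x : A) :
    (twistedConj (z, U) ^ k) x =
      (z : ℂ) ^ k • (((U ^ k : unitary A) : A) * x * ((U ^ (-k) : unitary A) : A)) := by
  rw [← map_zpow, Prod.pow_mk, twistedConj_apply, Circle.coe_zpow, zpow_neg,
    ← Unitary.star_eq_inv, Unitary.coe_star]

theorem norm_sub_twistedConj_apply (z : Circle) (U : unitary A) (x : A) :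
    ‖x - twistedConj (z, U) x‖ = ‖x * U - (z : ℂ) • ((U : A) * x)‖ := by
  rw [← CStarRing.norm_mul_coe_unitary _ U, twistedConj_apply, sub_mul, smul_mul_assoc, mul_assoc,
    Unitary.coe_star_mul_self, mul_one]

end TwistedConj

theorem opZpow_eq_coe_zpow {H : Type*} [NormedAddCommGroup H] [InnerProductSpace ℂ H]
    [CompleteSpace H] (U : unitary (H →L[ℂ] H)) (k : ℤ) :
    opZpow (U : H →L[ℂ] H) k = ((U ^ k : unitary (H →L[ℂ] H)) : H →L[ℂ] H) := by
  cases k with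
  | ofNat n => simp [opZpow]
  | negSucc n => simp [opZpow, zpow_negSucc, ← Unitary.star_eq_inv, star_pow]

theorem mul_add_one_div_two_mul_add_one_lt {x : ℝ} (hx : 0 ≤ x) :
    x * (x + 1) / (2 * x + 1) < (x + 1) / 2 := by
  rw [div_lt_div_iff₀ (by positivity) two_pos]
  nlinarith

theorem stmt_2_general {H : Type*} [NormedAddCommGroup H] [InnerProductSpace ℂ H] [CompleteSpace H]
    (q : ℂ) (hq : ‖q‖ = 1) (δ : ℝ) (u v : H →L[ℂ] H)
    (hu : u ∈ unitary (H →L[ℂ] H))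
    (h : ‖v * u - q • (u * v)‖ ≤ δ) (N : ℕ) :
    ‖v - ((2 * (N : ℂ) + 1)⁻¹) •
        ∑ k ∈ Finset.Icc (-(N : ℤ)) (N : ℤ), q ^ k • (opZpow u k * v * opZpow u (-k))‖
      ≤ ((N : ℝ) * (N + 1) / (2 * N + 1)) * δ ∧
    (0 < δ → ((N : ℝ) * (N + 1) / (2 * N + 1)) * δ < (((N : ℝ) + 1) / 2) * δ) := by
  let U : unitary (H →L[ℂ] H) := ⟨u, hu⟩
  let z : Circle := ⟨q, mem_sphere_zero_iff_norm.2 hq⟩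
  have hterm (k : ℤ) :
      q ^ k • (opZpow u k * v * opZpow u (-k)) = (twistedConj (z, U) ^ k) v := by
    rw [twistedConj_zpow_apply, ← opZpow_eq_coe_zpow, ← opZpow_eq_coe_zpow]
  have hstep : ‖v - twistedConj (z, U) v‖ ≤ δ := (norm_sub_twistedConj_apply z U v).trans_le h
  refine ⟨?_, fun hδ ↦ mul_lt_mul_of_pos_right
    (mul_add_one_div_two_mul_add_one_lt N.cast_nonneg) hδ⟩
  simp_rw [hterm]
  exact ((twistedConj (z, U)).norm_sub_average_zpow_apply_le v N).trans
    (mul_le_mul_of_nonneg_left hstep (by positivity))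

/-- If `u, v` are unitaries, `|q| = 1`, `‖vu - q·uv‖ ≤ δ` and `N ≥ 1`, then
`‖v - (1/(2N+1)) ∑_{k=-N}^{N} q^k u^k v u^{-k}‖ ≤ (N(N+1)/(2N+1))·δ`, and (for `δ > 0`)
`(N(N+1)/(2N+1))·δ < ((N+1)/2)·δ`. -/
theorem stmt_2 {H : Type*} [NormedAddCommGroup H] [InnerProductSpace ℂ H] [CompleteSpace H]
    (q : ℂ) (hq : ‖q‖ = 1) (δ : ℝ) (hδ : 0 ≤ δ) (u v : H →L[ℂ] H)
    (hu : u ∈ unitary (H →L[ℂ] H)) (hv : v ∈ unitary (H →L[ℂ] H))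
    (h : ‖v * u - q • (u * v)‖ ≤ δ) (N : ℕ) (hN : 1 ≤ N) :
    ‖v - ((2 * (N : ℂ) + 1)⁻¹) •
        ∑ k ∈ Finset.Icc (-(N : ℤ)) (N : ℤ), q ^ k • (opZpow u k * v * opZpow u (-k))‖
      ≤ ((N : ℝ) * (N + 1) / (2 * N + 1)) * δ ∧
    (0 < δ → ((N : ℝ) * (N + 1) / (2 * N + 1)) * δ < (((N : ℝ) + 1) / 2) * δ) :=
  stmt_2_general q hq δ u v hu h N
end

section
/- Let u, v be unitaries on H, q ∈ 𝕋, and define on H ⊗ ℓ²(ℤ) ⊗ ℓ²(ℤ) the operators ũũ = u ⊗ S ⊗ S and ṽṽ = ∑_{m,k} q^{k-m} u^{k-m} v u^{m-k} ⊗ p_k ⊗ p_m. For each ℓ ∈ ℤ, the closed subspace H_ℓ = span{ h ⊗ e_k ⊗ e_{k+ℓ} : k ∈ ℤ, h ∈ H } is reducing for both ũũ and ṽṽ, and the restriction of (ũũ, ṽṽ) to H_ℓ is unitarily equivalent to (u ⊗ S, q^{-ℓ} u^{-ℓ} v u^{ℓ} ⊗ id) on H ⊗ ℓ²(ℤ).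 -/
open scoped ENNReal ComplexInnerProductSpace in
/-- On `H ⊗ ℓ²(ℤ) ⊗ ℓ²(ℤ)` (modeled as `ℓ²(ℤ × ℤ, H)`, with `(k, m)` indexing
`e_k ⊗ e_m`), consider `ũũ = u ⊗ S ⊗ S`, i.e. `(ũũ f)(k,m) = u (f (k-1, m-1))`, and
`ṽṽ = ∑_{m,k} q^{k-m} u^{k-m} v u^{m-k} ⊗ p_k ⊗ p_m`, i.e.
`(ṽṽ f)(k,m) = q^{k-m} u^{k-m} v u^{m-k} (f (k,m))`. For each `ℓ ∈ ℤ` the closed subspace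
`H_ℓ = {f : f(k,m) = 0 unless m = k + ℓ}` is reducing for both, and the restriction of
`(ũũ, ṽṽ)` to `H_ℓ` is unitarily equivalent to `(u ⊗ S, q^{-ℓ} u^{-ℓ} v u^{ℓ} ⊗ id)` on
`H ⊗ ℓ²(ℤ)`: there is an isometry `W : ℓ²(ℤ, H) → ℓ²(ℤ × ℤ, H)` with range `H_ℓ`
intertwining the pairs. -/
theorem stmt_9 {H : Type*} [NormedAddCommGroup H] [InnerProductSpace ℂ H] [CompleteSpace H]
    (q : ℂ) (hq : ‖q‖ = 1) (u v : H →L[ℂ] H)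
    (hu : u ∈ unitary (H →L[ℂ] H)) (hv : v ∈ unitary (H →L[ℂ] H))
    (Uu Vv : lp (fun _ : ℤ × ℤ => H) 2 →L[ℂ] lp (fun _ : ℤ × ℤ => H) 2)
    (hUu : ∀ (f : lp (fun _ : ℤ × ℤ => H) 2) (p : ℤ × ℤ),
      (Uu f : ∀ _ : ℤ × ℤ, H) p = u (f (p.1 - 1, p.2 - 1)))
    (hVv : ∀ (f : lp (fun _ : ℤ × ℤ => H) 2) (p : ℤ × ℤ),
      (Vv f : ∀ _ : ℤ × ℤ, H) p =
        q ^ (p.1 - p.2) • (opZpow u (p.1 - p.2) * v * opZpow u (p.2 - p.1)) (f p))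
    (ℓ : ℤ)
    -- the model operators `u ⊗ S` and `q^{-ℓ} u^{-ℓ} v u^{ℓ} ⊗ id` on `H ⊗ ℓ²(ℤ)`:
    (A B : lp (fun _ : ℤ => H) 2 →L[ℂ] lp (fun _ : ℤ => H) 2)
    (hA : ∀ (f : lp (fun _ : ℤ => H) 2) (k : ℤ), (A f : ∀ _ : ℤ, H) k = u (f (k - 1)))
    (hB : ∀ (f : lp (fun _ : ℤ => H) 2) (k : ℤ),
      (B f : ∀ _ : ℤ, H) k = q ^ (-ℓ) • (opZpow u (-ℓ) * v * opZpow u ℓ) (f k)) :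
    -- `H_ℓ` is reducing for both `ũũ` and `ṽṽ`:
    (∀ f : lp (fun _ : ℤ × ℤ => H) 2, (∀ p : ℤ × ℤ, p.2 ≠ p.1 + ℓ → (f : ∀ _ : ℤ × ℤ, H) p = 0) →
      (∀ p : ℤ × ℤ, p.2 ≠ p.1 + ℓ → (Uu f : ∀ _ : ℤ × ℤ, H) p = 0) ∧
      (∀ p : ℤ × ℤ, p.2 ≠ p.1 + ℓ → (Vv f : ∀ _ : ℤ × ℤ, H) p = 0) ∧
      (∀ p : ℤ × ℤ, p.2 ≠ p.1 + ℓ → (ContinuousLinearMap.adjoint Uu f : ∀ _ : ℤ × ℤ, H) p = 0) ∧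
      (∀ p : ℤ × ℤ, p.2 ≠ p.1 + ℓ → (ContinuousLinearMap.adjoint Vv f : ∀ _ : ℤ × ℤ, H) p = 0)) ∧
    -- and the restriction to `H_ℓ` is unitarily equivalent to `(A, B)`:
    ∃ W : lp (fun _ : ℤ => H) 2 →L[ℂ] lp (fun _ : ℤ × ℤ => H) 2,
      Isometry W ∧
      Set.range W = {f : lp (fun _ : ℤ × ℤ => H) 2 |
        ∀ p : ℤ × ℤ, p.2 ≠ p.1 + ℓ → (f : ∀ _ : ℤ × ℤ, H) p = 0} ∧
      Uu ∘L W = W ∘L A ∧ Vv ∘L W = W ∘L B := by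
  have hp2 : (0:ℝ) < (2 : ℝ≥0∞).toReal := by norm_num
  constructor
  · -- reducing subspace
    intro f hf
    refine ⟨?_, ?_, ?_, ?_⟩
    · intro p hp
      rw [hUu, hf (p.1 - 1, p.2 - 1) (fun h => hp (by omega)), map_zero]
    · intro p hp
      rw [hVv, hf p hp, map_zero, smul_zero]
    · intro p hp
      have key : ∀ h : H,
          ⟪((ContinuousLinearMap.adjoint Uu) f : ∀ _ : ℤ × ℤ, H) p, h⟫ = 0 := by
        intro h
        have h1 : Uu (lp.single 2 p h) = lp.single 2 (p.1 + 1, p.2 + 1) (u h) := by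
          ext r
          rw [hUu]
          by_cases hr : r = (p.1 + 1, p.2 + 1)
          · subst hr
            have hpp : ((p.1 + 1 : ℤ) - 1, (p.2 + 1 : ℤ) - 1) = p := by simp
            rw [hpp, lp.single_apply_self, lp.single_apply_self]
          · have hne : (r.1 - 1, r.2 - 1) ≠ p := by
              intro hc
              apply hr
              have h1 := congrArg Prod.fst hc
              have h2 := congrArg Prod.snd hc
              simp only at h1 h2
              exact Prod.ext_iff.mpr ⟨by omega, by omega⟩
            rw [lp.single_apply_ne _ _ _ hne, map_zero, lp.single_apply_ne _ _ _ hr]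
        calc ⟪((ContinuousLinearMap.adjoint Uu) f : ∀ _ : ℤ × ℤ, H) p, h⟫
            = ⟪(ContinuousLinearMap.adjoint Uu) f, lp.single 2 p h⟫ :=
              (lp.inner_single_right _ _ _).symm
          _ = ⟪f, Uu (lp.single 2 p h)⟫ := ContinuousLinearMap.adjoint_inner_left _ _ _
          _ = ⟪f, lp.single 2 (p.1 + 1, p.2 + 1) (u h)⟫ := by rw [h1]
          _ = ⟪(f : ∀ _ : ℤ × ℤ, H) (p.1 + 1, p.2 + 1), u h⟫ := lp.inner_single_right _ _ _
          _ = 0 := by rw [hf (p.1 + 1, p.2 + 1) (fun h' => hp (by omega)), inner_zero_left]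
      exact inner_self_eq_zero.mp (key _)
    · intro p hp
      have key : ∀ h : H,
          ⟪((ContinuousLinearMap.adjoint Vv) f : ∀ _ : ℤ × ℤ, H) p, h⟫ = 0 := by
        intro h
        have h1 : Vv (lp.single 2 p h) =
            lp.single 2 p
              (q ^ (p.1 - p.2) • (opZpow u (p.1 - p.2) * v * opZpow u (p.2 - p.1)) h) := by
          ext r
          rw [hVv]
          by_cases hr : r = p
          · subst hr
            rw [lp.single_apply_self, lp.single_apply_self]
          · rw [lp.single_apply_ne _ _ _ hr, map_zero, smul_zero, lp.single_apply_ne _ _ _ hr]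
        calc ⟪((ContinuousLinearMap.adjoint Vv) f : ∀ _ : ℤ × ℤ, H) p, h⟫
            = ⟪(ContinuousLinearMap.adjoint Vv) f, lp.single 2 p h⟫ :=
              (lp.inner_single_right _ _ _).symm
          _ = ⟪f, Vv (lp.single 2 p h)⟫ := ContinuousLinearMap.adjoint_inner_left _ _ _
          _ = ⟪(f : ∀ _ : ℤ × ℤ, H) p,
                q ^ (p.1 - p.2) • (opZpow u (p.1 - p.2) * v * opZpow u (p.2 - p.1)) h⟫ := by
              rw [h1]; exact lp.inner_single_right _ _ _
          _ = 0 := by rw [hf p hp, inner_zero_left]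
      exact inner_self_eq_zero.mp (key _)
  · -- the isometry W
    set e : ℤ → ℤ × ℤ := fun k => (k, k + ℓ) with he_def
    have he : Function.Injective e := by
      intro a b hab
      simpa [e] using congrArg Prod.fst hab
    have hrange : ∀ p : ℤ × ℤ, p ∈ Set.range e ↔ p.2 = p.1 + ℓ := by
      intro p
      constructor
      · rintro ⟨k, rfl⟩; rfl
      · intro h
        exact ⟨p.1, by simp only [e]; exact Prod.ext_iff.mpr ⟨rfl, h.symm⟩⟩
    have h2ne : ((2 : ℝ≥0∞).toReal : ℝ) ≠ 0 := by norm_num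
    have hmem : ∀ f : lp (fun _ : ℤ => H) 2,
        Memℓp (fun p : ℤ × ℤ => if p.2 = p.1 + ℓ then f p.1 else 0) 2 := by
      intro f
      apply memℓp_gen
      have hz : ∀ p ∉ Set.range e,
          ‖(if p.2 = p.1 + ℓ then (f : ∀ _ : ℤ, H) p.1 else (0:H))‖ ^ (2 : ℝ≥0∞).toReal = 0 := by
        intro p hp
        rw [if_neg (fun h => hp ((hrange p).mpr h)), norm_zero, Real.zero_rpow h2ne]
      rw [← he.summable_iff hz]
      exact ((lp.memℓp f).summable hp2).congr (fun k => by simp [e, Function.comp])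
    let Wfun : lp (fun _ : ℤ => H) 2 → lp (fun _ : ℤ × ℤ => H) 2 :=
      fun f => ⟨fun p => if p.2 = p.1 + ℓ then f p.1 else 0, hmem f⟩
    have Wfun_apply : ∀ (f : lp (fun _ : ℤ => H) 2) (p : ℤ × ℤ),
        (Wfun f : ∀ _ : ℤ × ℤ, H) p = if p.2 = p.1 + ℓ then f p.1 else 0 := fun f p => rfl
    have hWnorm : ∀ f, ‖Wfun f‖ = ‖f‖ := by
      intro f
      rw [lp.norm_eq_tsum_rpow hp2, lp.norm_eq_tsum_rpow hp2]
      congr 1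
      have hsupp : Function.support
          (fun p : ℤ × ℤ => ‖(Wfun f : ∀ _ : ℤ × ℤ, H) p‖ ^ (2 : ℝ≥0∞).toReal) ⊆
          Set.range e := by
        intro p hp
        by_contra hc
        exact hp (show ‖(Wfun f : ∀ _ : ℤ × ℤ, H) p‖ ^ (2 : ℝ≥0∞).toReal = 0 by
          rw [Wfun_apply, if_neg (fun h => hc ((hrange p).mpr h)), norm_zero,
            Real.zero_rpow h2ne])
      rw [← he.tsum_eq hsupp]
      exact tsum_congr fun k => by simp [Wfun_apply, e]
    let Wli : lp (fun _ : ℤ => H) 2 →ₗᵢ[ℂ] lp (fun _ : ℤ × ℤ => H) 2 :=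
      { toFun := Wfun
        map_add' := by
          intro f g
          ext p
          simp only [Wfun_apply, lp.coeFn_add, Pi.add_apply]
          split_ifs <;> simp
        map_smul' := by
          intro c f
          ext p
          simp only [Wfun_apply, lp.coeFn_smul, Pi.smul_apply, RingHom.id_apply]
          split_ifs <;> simp
        norm_map' := hWnorm }
    refine ⟨Wli.toContinuousLinearMap, Wli.isometry, ?_, ?_, ?_⟩
    · ext g
      constructor
      · rintro ⟨f, rfl⟩ p hp
        show (Wfun f : ∀ _ : ℤ × ℤ, H) p = 0
        rw [Wfun_apply, if_neg hp]
      · intro hg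
        have hmem' : Memℓp (fun k : ℤ => (g : ∀ _ : ℤ × ℤ, H) (k, k + ℓ)) 2 := by
          apply memℓp_gen
          have hz : ∀ p ∉ Set.range e,
              ‖(g : ∀ _ : ℤ × ℤ, H) p‖ ^ (2 : ℝ≥0∞).toReal = 0 := by
            intro p hp
            rw [hg p (fun h => hp ((hrange p).mpr h)), norm_zero, Real.zero_rpow h2ne]
          exact (he.summable_iff hz).mpr ((lp.memℓp g).summable hp2)
        refine ⟨⟨fun k => (g : ∀ _ : ℤ × ℤ, H) (k, k + ℓ), hmem'⟩, ?_⟩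
        ext p
        obtain ⟨k, m⟩ := p
        show (if m = k + ℓ then (g : ∀ _ : ℤ × ℤ, H) (k, k + ℓ) else 0) =
          (g : ∀ _ : ℤ × ℤ, H) (k, m)
        by_cases h : m = k + ℓ
        · subst h
          rw [if_pos rfl]
        · rw [if_neg h, hg (k, m) h]
    · refine ContinuousLinearMap.ext fun f => ?_
      ext p
      rw [ContinuousLinearMap.comp_apply, ContinuousLinearMap.comp_apply, hUu]
      show u ((Wfun f : ∀ _ : ℤ × ℤ, H) (p.1 - 1, p.2 - 1)) =
        (Wfun (A f) : ∀ _ : ℤ × ℤ, H) p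
      rw [Wfun_apply, Wfun_apply]
      by_cases h : p.2 = p.1 + ℓ
      · rw [if_pos (by omega : p.2 - 1 = p.1 - 1 + ℓ), if_pos h, hA]
      · rw [if_neg (by omega : ¬ p.2 - 1 = p.1 - 1 + ℓ), if_neg h, map_zero]
    · refine ContinuousLinearMap.ext fun f => ?_
      ext p
      rw [ContinuousLinearMap.comp_apply, ContinuousLinearMap.comp_apply, hVv]
      show q ^ (p.1 - p.2) •
          (opZpow u (p.1 - p.2) * v * opZpow u (p.2 - p.1)) ((Wfun f : ∀ _ : ℤ × ℤ, H) p) =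
        (Wfun (B f) : ∀ _ : ℤ × ℤ, H) p
      rw [Wfun_apply, Wfun_apply]
      by_cases h : p.2 = p.1 + ℓ
      · rw [if_pos h, if_pos h, hB, (by omega : p.1 - p.2 = -ℓ), (by omega : p.2 - p.1 = ℓ)]
      · rw [if_neg h, if_neg h, map_zero, smul_zero]
end
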